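/- Under the spectral-folding setup with |L| = |S|, the matrix U_{SL} is invertible with 2 U_{SL} U_{SL}ᵀ Q_S = I; hence the interpolator x̃ = 2 U_{VL} U_{SL}ᵀ Q_S x_S is sample consistent (x̃_S = x_S) and coincides with the sample-consistent bandlimited interpolation U_{VL} (U_{SL}ᵀ Q_S U_{SL})⁻¹ U_{SL}ᵀ Q_S x_S. -/

import Mathlib

/-!
Write `J = signDiag S` and `Q = blockDiagPart S M`. Since `J Q J = Q` and `J M J = 2 Q - M`, the
folded eigenvector `u_{σ k} = J u_k` is again `Q`-normalised with eigenvalue `2 - λ_k`; hence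
`λ_{σ k} = 2 - λ_k`, and `σ` maps `L = {λ < 1}` into its complement. For `k, l ∈ L`, adding
`u_kᵀ Q u_l = δ_{kl}` and `(J u_k)ᵀ Q u_l = δ_{σ k, l} = 0` gives `2 (u_k)_Sᵀ Q_S (u_l)_S = δ_{kl}`,
because `1 + J` is twice the coordinate projection onto `S` and `Q` is block diagonal. So
`2 U_{SL}ᵀ Q_S` is a left inverse of the square matrix `U_{SL}`, hence also a right inverse, and
`(U_{SL}ᵀ Q_S U_{SL})⁻¹ = 2`.
-/

open Matrix

namespace SpectralFolding

variable {ι R : Type*} [DecidableEq ι] [CommRing R]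

def signDiag (S : Finset ι) : Matrix ι ι R :=
  diagonal fun i => if i ∈ S then 1 else -1

def blockDiagPart (S : Finset ι) (M : Matrix ι ι R) : Matrix ι ι R :=
  of fun i j => if (i ∈ S ∧ j ∈ S) ∨ (i ∉ S ∧ j ∉ S) then M i j else 0

variable {S : Finset ι}

theorem signDiag_transpose : (signDiag S : Matrix ι ι R)ᵀ = signDiag S :=
  diagonal_transpose _

theorem one_add_signDiag :
    1 + signDiag S = (2 : R) • diagonal fun i => if i ∈ S then (1 : R) else 0 := by
  ext i j
  by_cases hij : i = j
  · subst hij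
    by_cases hi : i ∈ S <;> simp [signDiag, hi]
    norm_num
  · simp [signDiag, one_apply, hij]

theorem signDiag_mul_blockDiagPart_mul_signDiag [Fintype ι] (M : Matrix ι ι R) :
    signDiag S * blockDiagPart S M * signDiag S = blockDiagPart S M := by
  ext i j
  by_cases hi : i ∈ S <;> by_cases hj : j ∈ S <;> simp [signDiag, blockDiagPart, hi, hj]

theorem signDiag_mul_mul_signDiag [Fintype ι] (M : Matrix ι ι R) :
    signDiag S * M * signDiag S = (2 : R) • blockDiagPart S M - M := by
  ext i j
  by_cases hi : i ∈ S <;> by_cases hj : j ∈ S <;> simp [signDiag, blockDiagPart, hi, hj] <;> ring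

theorem transpose_mul_diagonal_indicator_mul [Fintype ι] {m n : Type*}
    (A : Matrix ι m R) (B : Matrix ι n R) :
    Aᵀ * (diagonal fun i => if i ∈ S then (1 : R) else 0) * B =
      (A.submatrix (Subtype.val : S → ι) id)ᵀ * B.submatrix Subtype.val id := by
  ext k l
  simp only [mul_apply, transpose_apply, diagonal_apply, mul_ite, mul_zero, Finset.sum_ite_eq',
    Finset.mem_univ, if_true, ite_mul, zero_mul, mul_one, Finset.sum_ite_mem, Finset.univ_inter]
  exact (Finset.sum_coe_sort S fun i => A i k * B i l).symm

theorem blockDiagPart_mul_submatrix [Fintype ι] {n : Type*} (M : Matrix ι ι R)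
    (B : Matrix ι n R) :
    (blockDiagPart S M * B).submatrix (Subtype.val : S → ι) id =
      M.submatrix (Subtype.val : S → ι) (Subtype.val : S → ι) * B.submatrix Subtype.val id := by
  ext i l
  simp [mul_apply, blockDiagPart, Finset.sum_ite_mem]
  exact (Finset.sum_coe_sort S fun j => M i j * B j l).symm

theorem eigenvalue_fold_eq_two_sub [Fintype ι] {M U : Matrix ι ι R} {lam : ι → R}
    (σ : Equiv.Perm ι) (hUQU : Uᵀ * blockDiagPart S M * U = 1)
    (hMU : M * U = blockDiagPart S M * U * diagonal lam)
    (hfold : U.submatrix id σ = signDiag S * U) (k : ι) :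
    lam (σ k) = 2 - lam k := by
  have hVQV : (signDiag S * U)ᵀ * blockDiagPart S M * (signDiag S * U) = 1 :=
    calc _ = Uᵀ * (signDiag S * blockDiagPart S M * signDiag S) * U := by
          rw [transpose_mul, signDiag_transpose]
          simp only [Matrix.mul_assoc]
      _ = 1 := by rw [signDiag_mul_blockDiagPart_mul_signDiag, hUQU]
  have hMV : M * (signDiag S * U) =
      blockDiagPart S M * (signDiag S * U) * diagonal (lam ∘ σ) := by
    rw [← hfold, ← submatrix_diagonal_equiv lam σ, Matrix.mul_assoc, submatrix_mul_equiv]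
    change (M * U).submatrix id σ = (blockDiagPart S M * (U * diagonal lam)).submatrix id σ
    rw [hMU, Matrix.mul_assoc]
  have hUMU : Uᵀ * M * U = diagonal lam := by
    rw [Matrix.mul_assoc, hMU, ← Matrix.mul_assoc, ← Matrix.mul_assoc, hUQU, Matrix.one_mul]
  have hVMV : (signDiag S * U)ᵀ * M * (signDiag S * U) = diagonal fun k => 2 - lam k :=
    calc _ = Uᵀ * (signDiag S * M * signDiag S) * U := by
          rw [transpose_mul, signDiag_transpose]
          simp only [Matrix.mul_assoc]
      _ = (2 : R) • (Uᵀ * blockDiagPart S M * U) - Uᵀ * M * U := by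
          rw [signDiag_mul_mul_signDiag, Matrix.mul_sub, Matrix.sub_mul, Matrix.mul_smul,
            Matrix.smul_mul, Matrix.mul_assoc]
      _ = diagonal fun k => 2 - lam k := by
          rw [hUQU, hUMU]
          ext i j
          by_cases hij : i = j <;> simp [one_apply, hij]
  have hdiag : diagonal (lam ∘ σ) = diagonal fun k => 2 - lam k := by
    rw [← hVMV, Matrix.mul_assoc, hMV, ← Matrix.mul_assoc, ← Matrix.mul_assoc, hVQV,
      Matrix.one_mul]
  exact congr_fun (diagonal_injective hdiag) k

theorem two_smul_toBlock_transpose_mul_mul_eq_one [Fintype ι] {M U : Matrix ι ι R}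
    (σ : Equiv.Perm ι) {p : ι → Prop} (hp : ∀ k l, p k → p l → σ k ≠ l)
    (hUQU : Uᵀ * blockDiagPart S M * U = 1)
    (hfold : U.submatrix id σ = signDiag S * U) :
    (2 : R) • ((U.toBlock (· ∈ S) p)ᵀ * (M.toBlock (· ∈ S) (· ∈ S) * U.toBlock (· ∈ S) p)) =
      1 := by
  have hcross : (signDiag S * U)ᵀ * blockDiagPart S M * U = (1 : Matrix ι ι R).submatrix σ id := by
    rw [← hfold, ← hUQU]
    rfl
  have hsum : (2 : R) • (Uᵀ * (diagonal fun i => if i ∈ S then (1 : R) else 0) *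
      (blockDiagPart S M * U)) = 1 + (1 : Matrix ι ι R).submatrix σ id :=
    calc _ = Uᵀ * (1 + signDiag S) * (blockDiagPart S M * U) := by
          rw [one_add_signDiag, Matrix.mul_smul, Matrix.smul_mul]
      _ = Uᵀ * blockDiagPart S M * U + (signDiag S * U)ᵀ * blockDiagPart S M * U := by
          rw [transpose_mul, signDiag_transpose, Matrix.mul_add, Matrix.add_mul, Matrix.mul_one]
          simp only [Matrix.mul_assoc]
      _ = 1 + (1 : Matrix ι ι R).submatrix σ id := by rw [hUQU, hcross]
  rw [transpose_mul_diagonal_indicator_mul, blockDiagPart_mul_submatrix] at hsum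
  ext k l
  have hkl := congr_fun₂ hsum k l
  simp [one_apply, hp k l k.2 l.2, Subtype.ext_iff] at hkl ⊢
  exact hkl

end SpectralFolding

open SpectralFolding

theorem sf_interpolator_sample_consistent_general
    {N : ℕ}
    (M : Matrix (Fin N) (Fin N) ℝ)
    (S : Finset (Fin N))
    (J : Matrix (Fin N) (Fin N) ℝ)
    (hJ : J = Matrix.diagonal (fun i => if i ∈ S then (1 : ℝ) else -1))
    (Q : Matrix (Fin N) (Fin N) ℝ)
    (hQ : ∀ i j, Q i j =
      if (i ∈ S ∧ j ∈ S) ∨ (i ∉ S ∧ j ∉ S) then M i j else 0)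
    (lam : Fin N → ℝ)
    (U : Matrix (Fin N) (Fin N) ℝ)
    (hUQU : Uᵀ * Q * U = 1)
    (hMU : M * U = Q * U * Matrix.diagonal lam)
    (hfold : ∀ k : Fin N, (fun i => U i k.rev) = J.mulVec (fun i => U i k))
    (hcard : Fintype.card {k : Fin N // lam k < 1} =
      Fintype.card {i : Fin N // i ∈ S})
    (QS : Matrix {i : Fin N // i ∈ S} {i : Fin N // i ∈ S} ℝ)
    (hQS : QS = M.submatrix Subtype.val Subtype.val)
    (UVL : Matrix (Fin N) {k : Fin N // lam k < 1} ℝ)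
    (hUVL : UVL = U.submatrix id Subtype.val)
    (USL : Matrix {i : Fin N // i ∈ S} {k : Fin N // lam k < 1} ℝ)
    (hUSL : USL = U.submatrix Subtype.val Subtype.val) :
    ((2 : ℝ) • (USL * (USLᵀ * QS)) = 1) ∧
    (∃ V : Matrix {k : Fin N // lam k < 1} {i : Fin N // i ∈ S} ℝ,
      USL * V = 1 ∧ V * USL = 1) ∧
    (∀ x : Fin N → ℝ, ∀ i : {i : Fin N // i ∈ S},
      ((2 : ℝ) • (UVL * (USLᵀ * QS))).mulVec (fun j : {i : Fin N // i ∈ S} => x j.val)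
        i.val = x i.val) ∧
    (∀ x : Fin N → ℝ,
      ((2 : ℝ) • (UVL * (USLᵀ * QS))).mulVec (fun j : {i : Fin N // i ∈ S} => x j.val) =
        (UVL * (USLᵀ * QS * USL)⁻¹ * (USLᵀ * QS)).mulVec
          (fun j : {i : Fin N // i ∈ S} => x j.val)) := by
  obtain rfl : Q = blockDiagPart S M := ext hQ
  have hfoldJ : U.submatrix id Fin.revPerm = signDiag S * U := by
    subst hJ
    ext i k
    exact congrFun (hfold k) i
  have hrev : ∀ k l, lam k < 1 → lam l < 1 → Fin.revPerm k ≠ l := by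
    rintro k l hk hl rfl
    linarith [eigenvalue_fold_eq_two_sub Fin.revPerm hUQU hMU hfoldJ k]
  have hleft : (2 : ℝ) • (USLᵀ * QS) * USL = 1 := by
    rw [Matrix.smul_mul, Matrix.mul_assoc, hQS, hUSL]
    exact two_smul_toBlock_transpose_mul_mul_eq_one _ hrev hUQU hfoldJ
  have hright : USL * ((2 : ℝ) • (USLᵀ * QS)) = 1 :=
    (mul_eq_one_comm_of_card_eq _ _ _ hcard).mp hleft
  have hproj : (2 : ℝ) • (USL * (USLᵀ * QS)) = 1 := by rwa [Matrix.mul_smul] at hright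
  have hrows : ((2 : ℝ) • (UVL * (USLᵀ * QS))).submatrix Subtype.val id =
      (2 : ℝ) • (USL * (USLᵀ * QS)) := by
    rw [hUVL, hUSL]
    rfl
  have hinv : (USLᵀ * QS * USL)⁻¹ = (2 : ℝ) • 1 := by
    apply inv_eq_right_inv
    rwa [Matrix.mul_smul, Matrix.mul_one, ← Matrix.smul_mul]
  refine ⟨hproj, ⟨_, hright, hleft⟩, fun x i => ?_, fun x => ?_⟩
  · change (((2 : ℝ) • (UVL * (USLᵀ * QS))).submatrix Subtype.val id *ᵥ _) i = _
    rw [hrows, hproj, one_mulVec]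
  · rw [hinv, Matrix.mul_smul, Matrix.mul_one, Matrix.smul_mul]

/-- Under the spectral-folding setup with |L| = |S|, U_{SL} is invertible with
2 U_{SL} U_{SL}ᵀ Q_S = I; hence the interpolator x̃ = 2 U_{VL} U_{SL}ᵀ Q_S x_S
is sample consistent and coincides with the sample-consistent bandlimited
interpolation U_{VL} (U_{SL}ᵀ Q_S U_{SL})⁻¹ U_{SL}ᵀ Q_S x_S. -/
theorem sf_interpolator_sample_consistent
    {N : ℕ} (hN : 1 ≤ N)
    (M : Matrix (Fin N) (Fin N) ℝ) (hM : M.PosSemidef)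
    (S : Finset (Fin N))
    (J : Matrix (Fin N) (Fin N) ℝ)
    (hJ : J = Matrix.diagonal (fun i => if i ∈ S then (1 : ℝ) else -1))
    (Q : Matrix (Fin N) (Fin N) ℝ)
    (hQ : ∀ i j, Q i j =
      if (i ∈ S ∧ j ∈ S) ∨ (i ∉ S ∧ j ∉ S) then M i j else 0)
    (hQpd : Q.PosDef)
    (lam : Fin N → ℝ) (hlam : Monotone lam)
    (U : Matrix (Fin N) (Fin N) ℝ)
    (hUQU : Uᵀ * Q * U = 1)
    (hMU : M * U = Q * U * Matrix.diagonal lam)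
    (hfold : ∀ k : Fin N, (fun i => U i k.rev) = J.mulVec (fun i => U i k))
    (hcard : Fintype.card {k : Fin N // lam k < 1} =
      Fintype.card {i : Fin N // i ∈ S})
    (QS : Matrix {i : Fin N // i ∈ S} {i : Fin N // i ∈ S} ℝ)
    (hQS : QS = M.submatrix Subtype.val Subtype.val)
    (UVL : Matrix (Fin N) {k : Fin N // lam k < 1} ℝ)
    (hUVL : UVL = U.submatrix id Subtype.val)
    (USL : Matrix {i : Fin N // i ∈ S} {k : Fin N // lam k < 1} ℝ)
    (hUSL : USL = U.submatrix Subtype.val Subtype.val) :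
    ((2 : ℝ) • (USL * (USLᵀ * QS)) = 1) ∧
    (∃ V : Matrix {k : Fin N // lam k < 1} {i : Fin N // i ∈ S} ℝ,
      USL * V = 1 ∧ V * USL = 1) ∧
    (∀ x : Fin N → ℝ, ∀ i : {i : Fin N // i ∈ S},
      ((2 : ℝ) • (UVL * (USLᵀ * QS))).mulVec (fun j : {i : Fin N // i ∈ S} => x j.val)
        i.val = x i.val) ∧
    (∀ x : Fin N → ℝ,
      ((2 : ℝ) • (UVL * (USLᵀ * QS))).mulVec (fun j : {i : Fin N // i ∈ S} => x j.val) =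
        (UVL * (USLᵀ * QS * USL)⁻¹ * (USLᵀ * QS)).mulVec
          (fun j : {i : Fin N // i ∈ S} => x j.val)) :=
  sf_interpolator_sample_consistent_general M S J hJ Q hQ lam U hUQU hMU hfold hcard QS hQS UVL hUVL
    USL hUSL
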